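/- Let μ be a translation-invariant, downward FKG probability measure on {0,1}^ℤ and let ρ ∈ (0,1). Assume μ(η ≡ 0 on {1,2,…,n}) ≤ (1−ρ)^n for all n ≥ 1. Then for all disjoint finite subsets Λ, Δ of {…,−2,−1,0} with μ(η ≡ 0 on Λ and η ≡ 1 on Δ) > 0, and all n ≥ 1, one has μ(η ≡ 0 on {1,2,…,n} | η ≡ 0 on Λ, η ≡ 1 on Δ) ≤ (1−ρ)^n. In words: the exponential bound on runs of zeros persists under conditioning on any finite cylinder event in the past coordinates {…,−1,0}. (This is the discrete-time version of the claim, used in the proofs of Theorems 1.3 and 1.4, that the conditional probability of a run of zeros given any past information is at most the unconditioned exponential bound.) -/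

import Mathlib

open MeasureTheory ProbabilityTheory

/-- A measurable, increasing (upward-closed) event on `{0,1}^V`. -/
def IncreasingEvent {V : Type*} (B : Set (V → Bool)) : Prop :=
  MeasurableSet B ∧ ∀ ⦃ξ η : V → Bool⦄, ξ ≤ η → ξ ∈ B → η ∈ B

/-- A measure on `{0,1}^V` is positively associated if increasing events are
positively correlated. -/
def PositivelyAssociated {V : Type*} (μ : Measure (V → Bool)) : Prop :=
  ∀ B₁ B₂ : Set (V → Bool), IncreasingEvent B₁ → IncreasingEvent B₂ →
    μ B₁ * μ B₂ ≤ μ (B₁ ∩ B₂)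

/-- The event that the configuration is `0` everywhere on `Λ`. -/
def ZeroOn {V : Type*} (Λ : Set V) : Set (V → Bool) :=
  {η | ∀ x ∈ Λ, η x = false}

/-- Downward FKG: conditioned on being `0` on any finite set (of positive
probability), the measure is positively associated. -/
def DownwardFKG {V : Type*} (μ : Measure (V → Bool)) : Prop :=
  ∀ Λ : Finset V, 0 < μ (ZeroOn (Λ : Set V)) →
    PositivelyAssociated (μ[|ZeroOn (Λ : Set V)])

/-!
Write `z S = μ(η ≡ 0 on S)`. Under `μ(· | η ≡ 0 on Λ)`, which is positively associated by downward
FKG, the event `η ≡ 1 on Δ` is increasing and `η ≡ 0 on {1,…,n}` is decreasing, so conditioning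
on the former can only lower the probability of the latter. It therefore suffices to show
`z (Λ ∪ [1,n]) ≤ (1-ρ)^n z Λ`.

Downward FKG makes zero events positively correlated given zeros on `T`, i.e.
`z A * z B ≤ z (A ∪ B) * z T` for `T ⊆ A`, `T ⊆ B`. Take `T = Λ + j`, which lies in `[1,j]` once
`j` is large; with translation invariance this gives
`z (Λ ∪ [1,j]) * z (Λ ∪ [1,n]) ≤ z (Λ ∪ [1,j+n]) * z Λ`. Iterating `K` times and using the run
bound, `(z (Λ ∪ [1,n]))^K` is at most a constant times `((1-ρ)^n z Λ)^K`; let `K → ∞`.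
-/

open scoped NNReal ENNReal

section Cylinders

variable {V : Type*}

def OneOn (Λ : Set V) : Set (V → Bool) :=
  {η | ∀ x ∈ Λ, η x = true}

lemma zeroOn_union (S T : Set V) : ZeroOn (S ∪ T) = ZeroOn S ∩ ZeroOn T := by
  ext η
  simp only [ZeroOn, Set.mem_union, Set.mem_ofPred_eq, Set.mem_inter_iff, or_imp, forall_and]

lemma zeroOn_anti : Antitone (ZeroOn : Set V → Set (V → Bool)) :=
  fun _ _ hST _ hη x hx => hη x (hST hx)

@[simp]
lemma zeroOn_empty : ZeroOn (∅ : Set V) = Set.univ := by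
  simp [ZeroOn]

variable [Countable V]

lemma measurableSet_zeroOn (S : Set V) : MeasurableSet (ZeroOn S) := by
  simp only [ZeroOn, Set.ofPred_forall]
  exact .iInter fun x => .iInter fun _ =>
    measurableSet_eq_fun (measurable_pi_apply x) measurable_const

lemma measurableSet_oneOn (S : Set V) : MeasurableSet (OneOn S) := by
  simp only [OneOn, Set.ofPred_forall]
  exact .iInter fun x => .iInter fun _ =>
    measurableSet_eq_fun (measurable_pi_apply x) measurable_const

lemma increasingEvent_compl_zeroOn (S : Set V) : IncreasingEvent (ZeroOn S)ᶜ := by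
  refine ⟨(measurableSet_zeroOn S).compl, fun ξ η hξη hξ hη => hξ fun x hx => ?_⟩
  exact Bool.eq_false_of_le_false (hη x hx ▸ hξη x)

lemma increasingEvent_oneOn (S : Set V) : IncreasingEvent (OneOn S) := by
  refine ⟨measurableSet_oneOn S, fun ξ η hξη hξ x hx => ?_⟩
  exact le_antisymm (Bool.le_true _) (hξ x hx ▸ hξη x)

end Cylinders

lemma measureReal_cond_apply {Ω : Type*} [MeasurableSpace Ω] {μ : Measure Ω} [IsFiniteMeasure μ]
    {s : Set Ω} (hs : MeasurableSet s) (t : Set Ω) :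
    (μ[|s]).real t = μ.real (s ∩ t) / μ.real s := by
  simp [measureReal_def, cond_apply hs, div_eq_inv_mul]

section PositivelyAssociated

variable {V : Type*} {ν : Measure (V → Bool)} [IsProbabilityMeasure ν] {B C : Set (V → Bool)}

lemma PositivelyAssociated.measureReal_inter_le_mul (h : PositivelyAssociated ν)
    (hB : IncreasingEvent B) (hC : IncreasingEvent Cᶜ) :
    ν.real (B ∩ C) ≤ ν.real B * ν.real C := by
  have hcorr : ν.real B * ν.real Cᶜ ≤ ν.real (B ∩ Cᶜ) := by
    simpa only [measureReal_def, ENNReal.toReal_mul] using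
      ENNReal.toReal_mono (measure_ne_top _ _) (h B Cᶜ hB hC)
  have hCm : MeasurableSet C := hC.1.of_compl
  have hsplit := measureReal_inter_add_sdiff (s := B) hCm (μ := ν)
  rw [probReal_compl_eq_one_sub hCm, ← Set.sdiff_eq] at hcorr
  linarith

lemma PositivelyAssociated.mul_le_measureReal_inter (h : PositivelyAssociated ν)
    (hB : IncreasingEvent Bᶜ) (hC : IncreasingEvent Cᶜ) :
    ν.real B * ν.real C ≤ ν.real (B ∩ C) := by
  have hcorr := h.measureReal_inter_le_mul hB hC
  have hBm : MeasurableSet B := hB.1.of_compl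
  have hsplit := measureReal_inter_add_sdiff (s := C) hBm (μ := ν)
  rw [probReal_compl_eq_one_sub hBm, Set.inter_comm, ← Set.sdiff_eq] at hcorr
  rw [Set.inter_comm]
  linarith

lemma PositivelyAssociated.measureReal_cond_le (h : PositivelyAssociated ν)
    (hB : IncreasingEvent B) (hC : IncreasingEvent Cᶜ) :
    (ν[|B]).real C ≤ ν.real C := by
  rw [measureReal_cond_apply hB.1]
  exact div_le_of_le_mul₀ measureReal_nonneg measureReal_nonneg
    ((h.measureReal_inter_le_mul hB hC).trans_eq (mul_comm _ _))

end PositivelyAssociated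

section DownwardFKG

variable {V : Type*} [Countable V] {μ : Measure (V → Bool)} [IsProbabilityMeasure μ]

lemma DownwardFKG.measureReal_zeroOn_mul_le_of_subset (h : DownwardFKG μ) (T : Finset V)
    {A B : Set V} (hA : ↑T ⊆ A) (hB : ↑T ⊆ B) :
    μ.real (ZeroOn A) * μ.real (ZeroOn B) ≤ μ.real (ZeroOn (A ∪ B)) * μ.real (ZeroOn T) := by
  rcases eq_or_ne (μ (ZeroOn T)) 0 with hT | hT
  · have hA0 : μ.real (ZeroOn A) = 0 :=
      (measureReal_eq_zero_iff).mpr (measure_mono_null (zeroOn_anti hA) hT)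
    rw [hA0, zero_mul]
    positivity
  have := cond_isProbabilityMeasure hT
  have hcond : ∀ {S : Set V}, ↑T ⊆ S →
      (μ[|ZeroOn T]).real (ZeroOn S) = μ.real (ZeroOn S) / μ.real (ZeroOn T) := fun hS => by
    rw [measureReal_cond_apply (measurableSet_zeroOn _), Set.inter_eq_right.mpr (zeroOn_anti hS)]
  have hcorr := (h T (pos_iff_ne_zero.mpr hT)).mul_le_measureReal_inter
    (increasingEvent_compl_zeroOn A) (increasingEvent_compl_zeroOn B)
  have hTpos : 0 < μ.real (ZeroOn T) := ENNReal.toReal_pos hT (measure_ne_top _ _)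
  rw [← zeroOn_union, hcond hA, hcond hB, hcond (hA.trans Set.subset_union_left),
    div_mul_div_comm, div_le_div_iff₀ (by positivity) hTpos] at hcorr
  exact le_of_mul_le_mul_right (by linarith) hTpos

lemma DownwardFKG.measureReal_zeroOn_mul_le (h : DownwardFKG μ) (A B : Set V) :
    μ.real (ZeroOn A) * μ.real (ZeroOn B) ≤ μ.real (ZeroOn (A ∪ B)) := by
  simpa using h.measureReal_zeroOn_mul_le_of_subset ∅ (by simp) (by simp)

end DownwardFKG

section Shift

variable {μ : Measure (ℤ → Bool)}

lemma iterate_shift (j : ℕ) (η : ℤ → Bool) :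
    (fun (ξ : ℤ → Bool) x => ξ (x + 1))^[j] η = fun x => η (x + j) := by
  induction j generalizing η with
  | zero => simp
  | succ j ih =>
    rw [Function.iterate_succ_apply, ih]
    ext x
    push_cast
    ring_nf

lemma measureReal_zeroOn_image_add (htrans : μ.map (fun η x => η (x + 1)) = μ) (S : Set ℤ)
    (j : ℕ) : μ.real (ZeroOn ((· + (j : ℤ)) '' S)) = μ.real (ZeroOn S) := by
  have hshift : MeasurePreserving (fun (η : ℤ → Bool) x => η (x + 1)) μ μ :=
    ⟨measurable_pi_lambda _ fun x => measurable_pi_apply _, htrans⟩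
  have hpre : (fun (η : ℤ → Bool) x => η (x + 1))^[j] ⁻¹' ZeroOn S =
      ZeroOn ((· + (j : ℤ)) '' S) := by
    ext η
    simp only [ZeroOn, Set.mem_preimage, iterate_shift, Set.mem_ofPred_eq, Set.forall_mem_image]
  rw [← hpre, (hshift.iterate j).measureReal_preimage (measurableSet_zeroOn S).nullMeasurableSet]

variable [IsProbabilityMeasure μ]

lemma pow_le_measureReal_zeroOn_Icc (htrans : μ.map (fun η x => η (x + 1)) = μ)
    (hdfkg : DownwardFKG μ) (k : ℕ) :
    μ.real (ZeroOn {1}) ^ k ≤ μ.real (ZeroOn (Set.Icc 1 (k : ℤ))) := by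
  induction k with
  | zero => simp
  | succ k ih =>
    have hpt : μ.real (ZeroOn {((k + 1 : ℕ) : ℤ)}) = μ.real (ZeroOn {1}) := by
      rw [← measureReal_zeroOn_image_add htrans {1} k, Set.image_singleton]
      push_cast
      ring_nf
    have hunion : Set.Icc 1 ((k + 1 : ℕ) : ℤ) = Set.Icc 1 (k : ℤ) ∪ {((k + 1 : ℕ) : ℤ)} := by
      ext x
      simp only [Set.mem_Icc, Set.mem_union, Set.mem_singleton_iff]
      omega
    calc μ.real (ZeroOn {1}) ^ (k + 1)
        ≤ μ.real (ZeroOn (Set.Icc 1 (k : ℤ))) * μ.real (ZeroOn {((k + 1 : ℕ) : ℤ)}) := by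
          rw [pow_succ, hpt]
          gcongr
      _ ≤ μ.real (ZeroOn (Set.Icc 1 ((k + 1 : ℕ) : ℤ))) :=
          hunion ▸ hdfkg.measureReal_zeroOn_mul_le _ _

lemma measureReal_zeroOn_union_Icc_mul_le (htrans : μ.map (fun η x => η (x + 1)) = μ)
    (hdfkg : DownwardFKG μ) {Λ : Finset ℤ} {j : ℕ} (hΛ : ↑Λ ⊆ Set.Icc (1 - j : ℤ) 0) (n : ℕ) :
    μ.real (ZeroOn (↑Λ ∪ Set.Icc 1 (j : ℤ))) * μ.real (ZeroOn (↑Λ ∪ Set.Icc 1 (n : ℤ))) ≤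
      μ.real (ZeroOn (↑Λ ∪ Set.Icc 1 ((j + n : ℕ) : ℤ))) * μ.real (ZeroOn Λ) := by
  have hT : ((Λ.image (· + (j : ℤ)) : Finset ℤ) : Set ℤ) = (· + (j : ℤ)) '' Λ := Finset.coe_image
  have hTj : (· + (j : ℤ)) '' Λ ⊆ Set.Icc 1 (j : ℤ) := by
    rintro _ ⟨x, hx, rfl⟩
    have := hΛ hx
    simp only [Set.mem_Icc] at this ⊢
    omega
  have key := hdfkg.measureReal_zeroOn_mul_le_of_subset (Λ.image (· + (j : ℤ)))
    (A := ↑Λ ∪ Set.Icc 1 (j : ℤ)) (B := (· + (j : ℤ)) '' (↑Λ ∪ Set.Icc 1 (n : ℤ)))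
    (hT ▸ hTj.trans Set.subset_union_right) (hT ▸ Set.image_mono Set.subset_union_left)
  have hAB : (↑Λ ∪ Set.Icc 1 (j : ℤ)) ∪ (· + (j : ℤ)) '' (↑Λ ∪ Set.Icc 1 (n : ℤ)) =
      ↑Λ ∪ Set.Icc 1 ((j + n : ℕ) : ℤ) := by
    rw [Set.image_union, ← Set.union_assoc,
      Set.union_eq_self_of_subset_right (hTj.trans Set.subset_union_right),
      Set.image_add_const_Icc, Set.union_assoc]
    congr 1
    ext x
    simp only [Set.mem_Icc, Set.mem_union]
    omega
  rwa [hAB, measureReal_zeroOn_image_add htrans, hT, measureReal_zeroOn_image_add htrans] at key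

lemma measureReal_zeroOn_union_Icc_mul_pow_le (htrans : μ.map (fun η x => η (x + 1)) = μ)
    (hdfkg : DownwardFKG μ) {Λ : Finset ℤ} {j : ℕ} (hΛ : ↑Λ ⊆ Set.Icc (1 - j : ℤ) 0)
    (n K : ℕ) :
    μ.real (ZeroOn (↑Λ ∪ Set.Icc 1 (j : ℤ))) * μ.real (ZeroOn (↑Λ ∪ Set.Icc 1 (n : ℤ))) ^ K ≤
      μ.real (ZeroOn (↑Λ ∪ Set.Icc 1 ((j + K * n : ℕ) : ℤ))) * μ.real (ZeroOn Λ) ^ K := by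
  induction K with
  | zero => simp
  | succ K ih =>
    have hΛ' : ↑Λ ⊆ Set.Icc (1 - (j + K * n : ℕ) : ℤ) 0 :=
      hΛ.trans (Set.Icc_subset_Icc
        (sub_le_sub_left (by exact_mod_cast Nat.le_add_right j (K * n)) 1) le_rfl)
    set zn := μ.real (ZeroOn (↑Λ ∪ Set.Icc 1 (n : ℤ)))
    set zΛ := μ.real (ZeroOn Λ)
    calc _ = μ.real (ZeroOn (↑Λ ∪ Set.Icc 1 (j : ℤ))) * zn ^ K * zn := by ring
      _ ≤ μ.real (ZeroOn (↑Λ ∪ Set.Icc 1 ((j + K * n : ℕ) : ℤ))) * zΛ ^ K * zn :=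
          mul_le_mul_of_nonneg_right ih measureReal_nonneg
      _ = μ.real (ZeroOn (↑Λ ∪ Set.Icc 1 ((j + K * n : ℕ) : ℤ))) * zn * zΛ ^ K := by ring
      _ ≤ μ.real (ZeroOn (↑Λ ∪ Set.Icc 1 ((j + K * n + n : ℕ) : ℤ))) * zΛ * zΛ ^ K :=
          mul_le_mul_of_nonneg_right (measureReal_zeroOn_union_Icc_mul_le htrans hdfkg hΛ' n)
            (by positivity)
      _ = _ := by rw [show j + K * n + n = j + (K + 1) * n by ring, pow_succ]; ring

end Shift

lemma le_of_forall_mul_pow_le {a b C D : ℝ} (hC : 0 < C) (hb : 0 ≤ b)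
    (h : ∀ K : ℕ, C * a ^ K ≤ D * b ^ K) : a ≤ b := by
  by_contra! hba
  have ha : 0 < a := hb.trans_lt hba
  have hlim : Filter.Tendsto (fun K : ℕ => D * (b / a) ^ K) Filter.atTop (nhds 0) := by
    simpa using (tendsto_pow_atTop_nhds_zero_of_lt_one (by positivity)
      ((div_lt_one ha).mpr hba)).const_mul D
  have : C ≤ 0 := ge_of_tendsto' hlim fun K => by
    rw [div_pow, mul_div_assoc', le_div_iff₀ (pow_pos ha K)]
    exact h K
  linarith

theorem measureReal_zeroOn_union_Icc_le {μ : Measure (ℤ → Bool)} [IsProbabilityMeasure μ]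
    (htrans : μ.map (fun η x => η (x + 1)) = μ) (hdfkg : DownwardFKG μ) {r : ℝ≥0}
    (hrun : ∀ k : ℕ, 1 ≤ k → μ (ZeroOn (Set.Icc 1 (k : ℤ))) ≤ (r : ℝ≥0∞) ^ k)
    {Λ : Finset ℤ} (hΛ : (Λ : Set ℤ) ⊆ Set.Iic 0) (n : ℕ) :
    μ.real (ZeroOn (↑Λ ∪ Set.Icc 1 (n : ℤ))) ≤ r ^ n * μ.real (ZeroOn Λ) := by
  rcases Nat.eq_zero_or_pos n with rfl | hn
  · simp
  rcases measureReal_nonneg.eq_or_lt with hzero | hpos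
  · rw [← hzero]
    positivity
  have hrun' : ∀ k : ℕ, μ.real (ZeroOn (Set.Icc 1 (k : ℤ))) ≤ r ^ k := by
    rintro (_ | k)
    · simp
    · simpa [measureReal_def] using ENNReal.toReal_mono (by simp) (hrun (k + 1) (by omega))
  obtain ⟨j, hj⟩ : ∃ j : ℕ, ↑Λ ⊆ Set.Icc (1 - j : ℤ) 0 := by
    obtain ⟨b, hb⟩ := Λ.bddBelow
    exact ⟨(1 - b).toNat, fun x hx => ⟨by have := hb hx; omega, hΛ hx⟩⟩
  have hz1 : 0 < μ.real (ZeroOn {1}) :=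
    hpos.trans_le (measureReal_mono (zeroOn_anti (by simpa using Or.inr (by omega))))
  have hzΛ : 0 < μ.real (ZeroOn Λ) :=
    hpos.trans_le (measureReal_mono (zeroOn_anti Set.subset_union_left))
  have hC : 0 < μ.real (ZeroOn (↑Λ ∪ Set.Icc 1 (j : ℤ))) :=
    calc 0 < μ.real (ZeroOn Λ) * μ.real (ZeroOn {1}) ^ j := by positivity
      _ ≤ μ.real (ZeroOn Λ) * μ.real (ZeroOn (Set.Icc 1 (j : ℤ))) := by
        gcongr
        exact pow_le_measureReal_zeroOn_Icc htrans hdfkg j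
      _ ≤ _ := hdfkg.measureReal_zeroOn_mul_le _ _
  refine le_of_forall_mul_pow_le hC (by positivity) (D := r ^ j) fun K => ?_
  calc _ ≤ μ.real (ZeroOn (↑Λ ∪ Set.Icc 1 ((j + K * n : ℕ) : ℤ))) * μ.real (ZeroOn Λ) ^ K :=
        measureReal_zeroOn_union_Icc_mul_pow_le htrans hdfkg hj n K
    _ ≤ r ^ (j + K * n) * μ.real (ZeroOn Λ) ^ K := by
        gcongr
        exact (measureReal_mono (zeroOn_anti Set.subset_union_right)).trans (hrun' _)
    _ = r ^ j * (r ^ n * μ.real (ZeroOn Λ)) ^ K := by rw [pow_add, pow_mul', mul_pow]; ring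

theorem run_bound_given_past_general (μ : Measure (ℤ → Bool)) [IsProbabilityMeasure μ]
    (htrans : μ.map (fun η x => η (x + 1)) = μ)
    (hdfkg : DownwardFKG μ) (ρ : NNReal)
    (hrun : ∀ n : ℕ, 1 ≤ n →
      μ (ZeroOn {x : ℤ | 1 ≤ x ∧ x ≤ (n : ℤ)}) ≤ ((1 - ρ : NNReal) : ENNReal) ^ n) :
    ∀ Λ Δ : Finset ℤ, (↑Λ ⊆ {x : ℤ | x ≤ 0}) → (↑Δ ⊆ {x : ℤ | x ≤ 0}) →
      Disjoint Λ Δ →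
      0 < μ {η | (∀ x ∈ Λ, η x = false) ∧ (∀ x ∈ Δ, η x = true)} →
      ∀ n : ℕ, 1 ≤ n →
        μ[|{η | (∀ x ∈ Λ, η x = false) ∧ (∀ x ∈ Δ, η x = true)}]
            (ZeroOn {x : ℤ | 1 ≤ x ∧ x ≤ (n : ℤ)}) ≤
          ((1 - ρ : NNReal) : ENNReal) ^ n := by
  intro Λ Δ hΛ _ _ hpos n _
  have hΛpos : μ (ZeroOn Λ) ≠ 0 := (hpos.trans_le (measure_mono fun _ hη => hη.1)).ne'
  have := cond_isProbabilityMeasure hΛpos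
  change μ[|ZeroOn Λ ∩ OneOn Δ] (ZeroOn (Set.Icc 1 (n : ℤ))) ≤ _
  rw [← cond_cond_eq_cond_inter (measurableSet_zeroOn _) (measurableSet_oneOn _),
    ← ofReal_measureReal, ← ENNReal.ofReal_coe_nnreal, ← ENNReal.ofReal_pow (by positivity)]
  refine ENNReal.ofReal_le_ofReal ?_
  calc _ ≤ (μ[|ZeroOn Λ]).real (ZeroOn (Set.Icc 1 (n : ℤ))) :=
        (hdfkg Λ (pos_iff_ne_zero.mpr hΛpos)).measureReal_cond_le (increasingEvent_oneOn _)
          (increasingEvent_compl_zeroOn _)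
    _ = μ.real (ZeroOn (↑Λ ∪ Set.Icc 1 (n : ℤ))) / μ.real (ZeroOn Λ) := by
        rw [measureReal_cond_apply (measurableSet_zeroOn _), zeroOn_union]
    _ ≤ ((1 - ρ : ℝ≥0) : ℝ) ^ n := div_le_of_le_mul₀ measureReal_nonneg (by positivity)
        (measureReal_zeroOn_union_Icc_le htrans hdfkg hrun hΛ n)

/-- The exponential bound on runs of zeros persists under conditioning on any
finite cylinder event in the past coordinates `{…,−1,0}`. -/
theorem run_bound_given_past (μ : Measure (ℤ → Bool)) [IsProbabilityMeasure μ]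
    (htrans : μ.map (fun η x => η (x + 1)) = μ)
    (hdfkg : DownwardFKG μ) (ρ : NNReal) (hρ₀ : 0 < ρ) (hρ₁ : ρ < 1)
    (hrun : ∀ n : ℕ, 1 ≤ n →
      μ (ZeroOn {x : ℤ | 1 ≤ x ∧ x ≤ (n : ℤ)}) ≤ ((1 - ρ : NNReal) : ENNReal) ^ n) :
    ∀ Λ Δ : Finset ℤ, (↑Λ ⊆ {x : ℤ | x ≤ 0}) → (↑Δ ⊆ {x : ℤ | x ≤ 0}) →
      Disjoint Λ Δ →
      0 < μ {η | (∀ x ∈ Λ, η x = false) ∧ (∀ x ∈ Δ, η x = true)} →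
      ∀ n : ℕ, 1 ≤ n →
        μ[|{η | (∀ x ∈ Λ, η x = false) ∧ (∀ x ∈ Δ, η x = true)}]
            (ZeroOn {x : ℤ | 1 ≤ x ∧ x ≤ (n : ℤ)}) ≤
          ((1 - ρ : NNReal) : ENNReal) ^ n :=
  run_bound_given_past_general μ htrans hdfkg ρ hrun
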